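/- arXiv:2402.06821 — 3 statements merged into one kernel-verified Lean document; each statement's English description precedes it below -/
import Mathlib

section
/- Combinatorial core of Theorem 4.6: Let A and B be finite σ-structures with a homomorphism from A to B, let k, L ≥ 1, ρ_1, …, ρ_L : B → [k] × [k], G a finite simple graph, and X = X(B, (ρ_i)_{i=1}^L, G, k) the structure from the main construction. Suppose that for every homomorphism g : A → B there exist a finite σ-structure C, a homomorphism h : C → A, and l ∈ [L] such that ρ_l ∘ g ∘ h is a grid-like mapping from C onto [k] × [k]. Then G contains a clique of size k if and only if there exists a homomorphism from A to X. -/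
/-- A relational structure over signature `σ` with arities `ar` and universe `A`. -/
structure RelStruct (σ : Type) (ar : σ → ℕ) (A : Type) where
  rel : ∀ R : σ, Set (Fin (ar R) → A)

/-- `f` is a homomorphism of relational structures from `SA` to `SB`. -/
def IsHom {σ : Type} {ar : σ → ℕ} {A B : Type}
    (SA : RelStruct σ ar A) (SB : RelStruct σ ar B) (f : A → B) : Prop :=
  ∀ (R : σ) (t : Fin (ar R) → A), t ∈ SA.rel R → (fun j => f (t j)) ∈ SB.rel R

/-- The Gaifman (primal) graph of a relational structure. -/
def Gaifman {σ : Type} {ar : σ → ℕ} {A : Type} (SA : RelStruct σ ar A) : SimpleGraph A where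
  Adj a b := a ≠ b ∧ ∃ (R : σ) (t : Fin (ar R) → A),
      t ∈ SA.rel R ∧ a ∈ Set.range t ∧ b ∈ Set.range t
  symm := by
    constructor
    rintro a b ⟨hab, R, t, ht, ha, hb⟩
    exact ⟨hab.symm, R, t, ht, hb, ha⟩
  loopless := by
    constructor
    rintro a ⟨ha, -⟩
    exact ha rfl

/-- `ρ` is a grid-like mapping from the vertex set of the graph `G` onto `[k] × [k]`:
it is surjective and all the preimages of its two components are connected in `G`. -/
def GridLikeOn {C : Type} (G : SimpleGraph C) (k : ℕ) (ρ : C → Fin k × Fin k) : Prop :=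
  Function.Surjective ρ ∧ ∀ i : Fin k,
    (G.induce {c | (ρ c).1 = i}).Connected ∧
    (G.induce {c | (ρ c).2 = i}).Connected

/-- `ρ` is a grid-like mapping from the structure `SC` onto `[k] × [k]`. -/
def GridLike {σ : Type} {ar : σ → ℕ} {C : Type}
    (SC : RelStruct σ ar C) (k : ℕ) (ρ : C → Fin k × Fin k) : Prop :=
  GridLikeOn (Gaifman SC) k ρ

/-- `G` contains a clique of size `k`. -/
def HasNClique {V : Type} (G : SimpleGraph V) (k : ℕ) : Prop :=
  ∃ s : Finset V, G.IsNClique k s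

/-- The condition defining the universe of the structure `X` of the main construction. -/
def XOk {B V : Type} (k L : ℕ) (ρ : Fin L → B → Fin k × Fin k) (G : SimpleGraph V)
    (x : B × (Fin L → V × V)) : Prop :=
  ∀ i : Fin L,
    ((ρ i x.1).1 = (ρ i x.1).2 → (x.2 i).1 = (x.2 i).2) ∧
    ((ρ i x.1).1 ≠ (ρ i x.1).2 → G.Adj (x.2 i).1 (x.2 i).2)

/-- The structure `X = X(B, (ρ_i)_{i=1}^L, G, k)` of the main construction. -/
def XStruct {σ : Type} {ar : σ → ℕ} {B V : Type} (SB : RelStruct σ ar B) (k L : ℕ)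
    (ρ : Fin L → B → Fin k × Fin k) (G : SimpleGraph V) :
    RelStruct σ ar {x : B × (Fin L → V × V) // XOk k L ρ G x} where
  rel R := {t |
    (fun j => (t j).1.1) ∈ SB.rel R ∧
    ∀ (j j' : Fin (ar R)) (i : Fin L),
      ((ρ i (t j).1.1).1 = (ρ i (t j').1.1).1 → ((t j).1.2 i).1 = ((t j').1.2 i).1) ∧
      ((ρ i (t j).1.1).2 = (ρ i (t j').1.1).2 → ((t j).1.2 i).2 = ((t j').1.2 i).2)}

/-!
A clique `φ : [k] → V` gives the homomorphism `b ↦ (b, (φ (ρ_i b).1, φ (ρ_i b).2)_i)` from `B` to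
`X`; compose it with a homomorphism `A → B`. Conversely, let `F : A → X` be a homomorphism.
Its projection to `B` is a homomorphism, so condition (*) provides a grid-like `C → A → B → [k]²`.
Along every tuple of `C`, the `l`-th coordinates `(u, v)` of `F` agree on entries in a common row,
resp. column; since rows and columns are connected, `u` depends only on the row, `u = U ∘ ρ¹`, and
`v` only on the column, `v = W ∘ ρ²`. Diagonal cells force `U = W`, off-diagonal cells force
`U i ~ W j` for `i ≠ j`, so `U` is a `k`-clique of `G`.
-/

theorem SimpleGraph.Preconnected.eq_of_forall_adj {W α : Type*} {H : SimpleGraph W}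
    (hH : H.Preconnected) {f : W → α} (hf : ∀ x y, H.Adj x y → f x = f y) (x y : W) :
    f x = f y := by
  obtain ⟨w⟩ := hH x y
  induction w with
  | nil => rfl
  | cons hadj _ ih => exact (hf _ _ hadj).trans ih

theorem SimpleGraph.exists_factor_of_connected_fibers {C ι α : Type*} (H : SimpleGraph C)
    (π : C → ι) (hconn : ∀ i, (H.induce {c | π c = i}).Connected) (u : C → α)
    (hu : ∀ c c', H.Adj c c' → π c = π c' → u c = u c') :
    ∃ U : ι → α, ∀ c, u c = U (π c) := by
  let p i : {c | π c = i} := (hconn i).nonempty.some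
  refine ⟨fun i => u (p i), fun c => ?_⟩
  refine (hconn (π c)).preconnected.eq_of_forall_adj (f := fun c' => u c') ?_ ⟨c, rfl⟩ (p (π c))
  rintro ⟨x, hx⟩ ⟨y, hy⟩ hxy
  exact hu x y hxy (hx.trans hy.symm)

theorem hasNClique_iff_nonempty_topHom {V : Type} (G : SimpleGraph V) (k : ℕ) :
    HasNClique G k ↔ Nonempty ((⊤ : SimpleGraph (Fin k)) →g G) := by
  have hfree : HasNClique G k ↔ ¬G.CliqueFree k := by simp [HasNClique, SimpleGraph.CliqueFree]
  rw [hfree, SimpleGraph.not_cliqueFree_iff_top_isContained]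
  exact ⟨fun ⟨c⟩ => ⟨c.toHom⟩, fun ⟨φ⟩ => ⟨⟨φ, φ.injective_of_top_hom⟩⟩⟩

section RelStruct

variable {σ : Type} {ar : σ → ℕ} {A B C V : Type}

theorem IsHom.comp {SA : RelStruct σ ar A} {SB : RelStruct σ ar B} {SC : RelStruct σ ar C}
    {g : B → C} {f : A → B} (hg : IsHom SB SC g) (hf : IsHom SA SB f) :
    IsHom SA SC (g ∘ f) :=
  fun R t ht => hg R _ (hf R t ht)

variable (SB : RelStruct σ ar B) {k L : ℕ} (ρ : Fin L → B → Fin k × Fin k) {G : SimpleGraph V}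

theorem isHom_xStruct_proj :
    IsHom (XStruct SB k L ρ G) SB (fun x => x.1.1) :=
  fun _ _ ht => ht.1

def cliqueSection (φ : (⊤ : SimpleGraph (Fin k)) →g G) (b : B) :
    {x : B × (Fin L → V × V) // XOk k L ρ G x} :=
  ⟨(b, fun i => (φ (ρ i b).1, φ (ρ i b).2)),
    fun _ => ⟨congrArg φ, fun hne => φ.map_adj hne⟩⟩

theorem isHom_cliqueSection (φ : (⊤ : SimpleGraph (Fin k)) →g G) :
    IsHom SB (XStruct SB k L ρ G) (cliqueSection ρ φ) :=
  fun _ _ ht => ⟨ht, fun _ _ _ => ⟨congrArg φ, congrArg φ⟩⟩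

variable {SB ρ}

theorem IsHom.xStruct_coord_eq_of_adj {SC : RelStruct σ ar C}
    {F : C → {x : B × (Fin L → V × V) // XOk k L ρ G x}} (hF : IsHom SC (XStruct SB k L ρ G) F)
    {c c' : C} (hcc' : (Gaifman SC).Adj c c') (i : Fin L) :
    ((ρ i (F c).1.1).1 = (ρ i (F c').1.1).1 → ((F c).1.2 i).1 = ((F c').1.2 i).1) ∧
      ((ρ i (F c).1.1).2 = (ρ i (F c').1.1).2 → ((F c).1.2 i).2 = ((F c').1.2 i).2) := by
  obtain ⟨-, R, t, ht, ⟨j, rfl⟩, ⟨j', rfl⟩⟩ := hcc'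
  exact (hF R t ht).2 j j' i

theorem IsHom.nonempty_topHom_of_gridLike {SC : RelStruct σ ar C}
    {F : C → {x : B × (Fin L → V × V) // XOk k L ρ G x}} (hF : IsHom SC (XStruct SB k L ρ G) F)
    (l : Fin L) (hgrid : GridLike SC k (fun c => ρ l (F c).1.1)) :
    Nonempty ((⊤ : SimpleGraph (Fin k)) →g G) := by
  set π := fun c => ρ l (F c).1.1
  obtain ⟨hsurj, hconn⟩ := hgrid
  obtain ⟨U, hU⟩ := (Gaifman SC).exists_factor_of_connected_fibers (fun c => (π c).1)
    (fun i => (hconn i).1) (fun c => ((F c).1.2 l).1)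
    (fun _ _ hadj => (hF.xStruct_coord_eq_of_adj hadj l).1)
  obtain ⟨W, hW⟩ := (Gaifman SC).exists_factor_of_connected_fibers (fun c => (π c).2)
    (fun i => (hconn i).2) (fun c => ((F c).1.2 l).2)
    (fun _ _ hadj => (hF.xStruct_coord_eq_of_adj hadj l).2)
  choose cell hcell using hsurj
  have hcellU : ∀ p, ((F (cell p)).1.2 l).1 = U p.1 := fun p => by rw [hU, hcell]
  have hcellW : ∀ p, ((F (cell p)).1.2 l).2 = W p.2 := fun p => by rw [hW, hcell]
  have hcellOk : ∀ p, ((p.1 = p.2 → ((F (cell p)).1.2 l).1 = ((F (cell p)).1.2 l).2) ∧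
      (p.1 ≠ p.2 → G.Adj ((F (cell p)).1.2 l).1 ((F (cell p)).1.2 l).2)) := fun p => by
    simpa only [π, hcell] using (F (cell p)).2 l
  have hUW : ∀ i, U i = W i := fun i => by
    rw [← hcellU (i, i), ← hcellW (i, i)]
    exact (hcellOk (i, i)).1 rfl
  refine ⟨⟨U, fun {i j} hij => ?_⟩⟩
  rw [hUW j, ← hcellU (i, j), ← hcellW (i, j)]
  exact (hcellOk (i, j)).2 hij

end RelStruct

theorem main_reduction_correct_general
    {σ : Type} {ar : σ → ℕ} {A B V : Type}
    (SA : RelStruct σ ar A) (SB : RelStruct σ ar B)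
    (hAB : ∃ f : A → B, IsHom SA SB f)
    (k L : ℕ)
    (ρ : Fin L → B → Fin k × Fin k) (G : SimpleGraph V)
    (hstar : ∀ g : A → B, IsHom SA SB g →
      ∃ (C : Type) (SC : RelStruct σ ar C) (h : C → A),
        Finite C ∧ IsHom SC SA h ∧
          ∃ l : Fin L, GridLike SC k (fun c => ρ l (g (h c)))) :
    (HasNClique G k ↔
      ∃ f : A → {x : B × (Fin L → V × V) // XOk k L ρ G x},
        IsHom SA (XStruct SB k L ρ G) f) := by
  rw [hasNClique_iff_nonempty_topHom]
  constructor
  · rintro ⟨φ⟩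
    obtain ⟨f, hf⟩ := hAB
    exact ⟨_, (isHom_cliqueSection SB ρ φ).comp hf⟩
  · rintro ⟨F, hF⟩
    obtain ⟨C, SC, h, -, hh, l, hgrid⟩ := hstar _ ((isHom_xStruct_proj SB ρ).comp hF)
    exact (hF.comp hh).nonempty_topHom_of_gridLike l hgrid

/-- Combinatorial core of Theorem 4.6. Under condition (*), `G` contains a
clique of size `k` iff there is a homomorphism from `A` to `X = X(B, (ρ_i)_{i=1}^L, G, k)`. -/
theorem main_reduction_correct
    {σ : Type} {ar : σ → ℕ} {A B V : Type}
    [Finite σ] [Finite A] [Finite B] [Finite V]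
    (SA : RelStruct σ ar A) (SB : RelStruct σ ar B)
    (hAB : ∃ f : A → B, IsHom SA SB f)
    (k L : ℕ) (hk : 1 ≤ k) (hL : 1 ≤ L)
    (ρ : Fin L → B → Fin k × Fin k) (G : SimpleGraph V)
    (hstar : ∀ g : A → B, IsHom SA SB g →
      ∃ (C : Type) (SC : RelStruct σ ar C) (h : C → A),
        Finite C ∧ IsHom SC SA h ∧
          ∃ l : Fin L, GridLike SC k (fun c => ρ l (g (h c)))) :
    (HasNClique G k ↔
      ∃ f : A → {x : B × (Fin L → V × V) // XOk k L ρ G x},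
        IsHom SA (XStruct SB k L ρ G) f) :=
  main_reduction_correct_general SA SB hAB k L ρ G hstar
end

section
/- Clique extraction from a grid-like mapping (final step of the proof of Theorem 4.6): Let C be a finite σ-structure, G a finite simple graph, k ≥ 1, and ξ : C → [k] × [k] a grid-like mapping from C onto [k] × [k] with components ξ = (ξ¹, ξ²). Suppose u, v : C → V(G) are functions such that: (i) for every c ∈ C, if ξ¹(c) = ξ²(c) then u(c) = v(c), and if ξ¹(c) ≠ ξ²(c) then {u(c), v(c)} is an edge of G; (ii) for every edge {c, c'} of the Gaifman graph of C, if ξ¹(c) = ξ¹(c') then u(c) = u(c'), and if ξ²(c) = ξ²(c') then v(c) = v(c'). Then G contains a clique of size k. -/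
theorem SimpleGraph.Preconnected.apply_eq_of_adj {A β : Type*} {G : SimpleGraph A}
    (hG : G.Preconnected) {f : A → β} (hf : ∀ a b, G.Adj a b → f a = f b) (a b : A) :
    f a = f b := by
  obtain ⟨w⟩ := hG a b
  induction w with
  | nil => rfl
  | cons hadj _ ih => exact (hf _ _ hadj).trans ih

theorem eq_of_preconnected_fiber {A ι β : Type*} {G : SimpleGraph A} {g : A → ι} {i : ι}
    (hfib : (G.induce {a | g a = i}).Preconnected) {f : A → β}
    (hf : ∀ a b, G.Adj a b → g a = g b → f a = f b) {a b : A} (ha : g a = i) (hb : g b = i) :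
    f a = f b :=
  hfib.apply_eq_of_adj (f := fun x => f x) (fun x y hxy => hf x y hxy (x.2.trans y.2.symm))
    ⟨a, ha⟩ ⟨b, hb⟩

theorem hasNClique_of_pairwise_adj {V : Type} {G : SimpleGraph V} {k : ℕ} {w : Fin k → V}
    (hw : ∀ i j, i ≠ j → G.Adj (w i) (w j)) : HasNClique G k := by
  let f : (⊤ : SimpleGraph (Fin k)) →g G := ⟨w, fun hij => hw _ _ hij⟩
  have hf := SimpleGraph.isNClique_map_copy_top (f.toCopy f.injective_of_top_hom)
  rw [Fintype.card_fin] at hf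
  exact ⟨_, hf⟩

theorem GridLikeOn.hasNClique {C V : Type} {H : SimpleGraph C} {G : SimpleGraph V} {k : ℕ}
    {ξ : C → Fin k × Fin k} (hξ : GridLikeOn H k ξ) {u v : C → V}
    (hdiag : ∀ c, (ξ c).1 = (ξ c).2 → u c = v c)
    (hoff : ∀ c, (ξ c).1 ≠ (ξ c).2 → G.Adj (u c) (v c))
    (hrow : ∀ c c', H.Adj c c' → (ξ c).1 = (ξ c').1 → u c = u c')
    (hcol : ∀ c c', H.Adj c c' → (ξ c).2 = (ξ c').2 → v c = v c') :
    HasNClique G k := by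
  choose d hd using hξ.1
  have hd₁ : ∀ p, (ξ (d p)).1 = p.1 := fun p => by rw [hd]
  have hd₂ : ∀ p, (ξ (d p)).2 = p.2 := fun p => by rw [hd]
  set w : Fin k → V := fun i => u (d (i, i))
  have hu : ∀ c, u c = w (ξ c).1 := fun c =>
    eq_of_preconnected_fiber (hξ.2 _).1.preconnected hrow rfl (hd₁ _)
  have hv : ∀ c, v c = w (ξ c).2 := fun c => by
    rw [eq_of_preconnected_fiber (hξ.2 _).2.preconnected hcol rfl (hd₂ ((ξ c).2, (ξ c).2)),
      ← hdiag _ (by rw [hd₁, hd₂])]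
  refine hasNClique_of_pairwise_adj (w := w) fun i j hij => ?_
  have hadj := hoff (d (i, j)) (by rwa [hd₁, hd₂])
  rwa [hu, hv, hd₁, hd₂] at hadj

theorem clique_from_gridlike_general
    {σ : Type} {ar : σ → ℕ} {C V : Type}
    (SC : RelStruct σ ar C) (G : SimpleGraph V) (k : ℕ)
    (ξ : C → Fin k × Fin k) (hξ : GridLike SC k ξ)
    (u v : C → V)
    (h1 : ∀ c : C, ((ξ c).1 = (ξ c).2 → u c = v c) ∧
      ((ξ c).1 ≠ (ξ c).2 → G.Adj (u c) (v c)))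
    (h2 : ∀ c c' : C, (Gaifman SC).Adj c c' →
      ((ξ c).1 = (ξ c').1 → u c = u c') ∧ ((ξ c).2 = (ξ c').2 → v c = v c')) :
    HasNClique G k :=
  GridLikeOn.hasNClique hξ (fun c => (h1 c).1) (fun c => (h1 c).2)
    (fun c c' h => (h2 c c' h).1) (fun c c' h => (h2 c c' h).2)

/-- Clique extraction from a grid-like mapping (final step of the proof of
Theorem 4.6). -/
theorem clique_from_gridlike
    {σ : Type} {ar : σ → ℕ} {C V : Type} [Finite σ] [Finite C] [Finite V]
    (SC : RelStruct σ ar C) (G : SimpleGraph V) (k : ℕ) (hk : 1 ≤ k)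
    (ξ : C → Fin k × Fin k) (hξ : GridLike SC k ξ)
    (u v : C → V)
    (h1 : ∀ c : C, ((ξ c).1 = (ξ c).2 → u c = v c) ∧
      ((ξ c).1 ≠ (ξ c).2 → G.Adj (u c) (v c)))
    (h2 : ∀ c c' : C, (Gaifman SC).Adj c c' →
      ((ξ c).1 = (ξ c').1 → u c = u c') ∧ ((ξ c).2 = (ξ c').2 → v c = v c')) :
    HasNClique G k :=
  clique_from_gridlike_general SC G k ξ hξ u v h1 h2
end

section
/- Grid-likeness of reduced injective grid homomorphisms (Example of Section 4): Let 1 ≤ k ≤ m and define ρ : {0,…,m−1}² → {0,…,k−1}² by ρ(i,j) = (i mod k, j mod k). Then for every injective graph homomorphism g from the (k × k)-grid to the (m × m)-grid, the composition ρ ∘ g is a grid-like mapping from the (k × k)-grid onto {0,…,k−1}², i.e. ρ ∘ g is surjective and, for each i ∈ {0,…,k−1}, the preimages of i under each of the two components of ρ ∘ g are connected subsets of the (k × k)-grid. -/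
/-- The `(k × l)`-grid graph: vertices `[k] × [l]`, with `(i,j)` and `(i',j')`
adjacent iff `|i - i'| + |j - j'| = 1`. -/
def gridGraph (k l : ℕ) : SimpleGraph (Fin k × Fin l) where
  Adj p q := ((p.1 : ℤ) - (q.1 : ℤ)).natAbs + ((p.2 : ℤ) - (q.2 : ℤ)).natAbs = 1
  symm := by
    constructor
    intro p q h
    omega
  loopless := by
    constructor
    intro p h
    simp at h


/-!
An injective homomorphism `g` of the `k × k` grid into a grid is a rigid motion. The two paths
of length two around a unit square of the source go to unit-step paths with common endpoints,
distinct middle points and distinct start and end points; such paths are the two halves of a unit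
square. Hence right-steps do not depend on the row, up-steps do not depend on the column, and each
right-step is perpendicular to the up-step at the same point. Two consecutive right-steps are then
perpendicular to one up-step and do not backtrack, so all right-steps coincide, and likewise all
up-steps. Thus `g (i, j) = g (0, 0) + i • u + j • w` for perpendicular unit vectors `u`, `w`: up to
exchanging the axes, the coordinates of `g (i, j)` are `a ± i` and `b ± j`. As `i ↦ (a ± i) mod k`
permutes `{0, …, k - 1}`, the fibres of the components of `ρ ∘ g` are the rows and the columns of
the grid.
-/

def IsUnitStep (d : ℤ × ℤ) : Prop := d.1.natAbs + d.2.natAbs = 1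

theorem isUnitStep_mk_iff {x y : ℤ} :
    IsUnitStep (x, y) ↔
      x = 1 ∧ y = 0 ∨ x = -1 ∧ y = 0 ∨ x = 0 ∧ y = 1 ∨ x = 0 ∧ y = -1 := by
  unfold IsUnitStep
  omega

namespace IsUnitStep

variable {a b c d : ℤ × ℤ}

theorem eq_of_add_eq_add (ha : IsUnitStep a) (hb : IsUnitStep b) (hc : IsUnitStep c)
    (hd : IsUnitStep d) (h : a + b = c + d) (hab : a + b ≠ 0) (hac : a ≠ c) :
    a = d ∧ b = c := by
  obtain ⟨a1, a2⟩ := a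
  obtain ⟨b1, b2⟩ := b
  obtain ⟨c1, c2⟩ := c
  obtain ⟨d1, d2⟩ := d
  simp only [isUnitStep_mk_iff, Prod.mk_add_mk, Prod.mk.injEq, ne_eq, Prod.mk_eq_zero] at *
  rcases ha with ⟨rfl, rfl⟩ | ⟨rfl, rfl⟩ | ⟨rfl, rfl⟩ | ⟨rfl, rfl⟩ <;>
    rcases hc with ⟨rfl, rfl⟩ | ⟨rfl, rfl⟩ | ⟨rfl, rfl⟩ | ⟨rfl, rfl⟩ <;> omega

theorem eq_of_ne_of_ne_neg (ha : IsUnitStep a) (hb : IsUnitStep b) (hc : IsUnitStep c)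
    (hac : a ≠ c) (hac' : a ≠ -c) (hbc : b ≠ c) (hbc' : b ≠ -c) (hab : a ≠ -b) :
    a = b := by
  obtain ⟨a1, a2⟩ := a
  obtain ⟨b1, b2⟩ := b
  obtain ⟨c1, c2⟩ := c
  simp only [isUnitStep_mk_iff] at ha hb hc
  rcases ha with ⟨rfl, rfl⟩ | ⟨rfl, rfl⟩ | ⟨rfl, rfl⟩ | ⟨rfl, rfl⟩ <;>
    rcases hb with ⟨rfl, rfl⟩ | ⟨rfl, rfl⟩ | ⟨rfl, rfl⟩ | ⟨rfl, rfl⟩ <;>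
    rcases hc with ⟨rfl, rfl⟩ | ⟨rfl, rfl⟩ | ⟨rfl, rfl⟩ | ⟨rfl, rfl⟩ <;> simp_all

theorem eq_axes_of_ne_of_ne_neg (ha : IsUnitStep a) (hb : IsUnitStep b) (hab : a ≠ b)
    (hab' : a ≠ -b) : ∃ ε δ : ℤ, IsUnit ε ∧ IsUnit δ ∧
      (a = (ε, 0) ∧ b = (0, δ) ∨ a = (0, ε) ∧ b = (δ, 0)) := by
  obtain ⟨a1, a2⟩ := a
  obtain ⟨b1, b2⟩ := b
  simp only [isUnitStep_mk_iff, ne_eq, Prod.neg_mk, Prod.mk.injEq, Int.isUnit_iff] at *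
  rcases ha with ⟨rfl, rfl⟩ | ⟨rfl, rfl⟩ | ⟨rfl, rfl⟩ | ⟨rfl, rfl⟩ <;>
    rcases hb with ⟨rfl, rfl⟩ | ⟨rfl, rfl⟩ | ⟨rfl, rfl⟩ | ⟨rfl, rfl⟩ <;> simp at *

end IsUnitStep

theorem eq_add_nsmul_of_sub_eq {G : Type*} [AddCommGroup G] {N : ℕ} {a : ℕ → G} {d : G}
    (h : ∀ n, n + 1 < N → a (n + 1) - a n = d) : ∀ n, n < N → a n = a 0 + n • d := by
  intro n hn
  induction n with
  | zero => simp
  | succ n ih =>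
    rw [← sub_add_cancel (a (n + 1)) (a n), h n hn, ih (by omega), succ_nsmul]
    abel

structure IsGridEmbedding (k l : ℕ) (f : ℕ → ℕ → ℤ × ℤ) : Prop where
  isUnitStep_right : ∀ i j, i + 1 < k → j < l → IsUnitStep (f (i + 1) j - f i j)
  isUnitStep_up : ∀ i j, i < k → j + 1 < l → IsUnitStep (f i (j + 1) - f i j)
  injOn : ∀ i j i' j', i < k → j < l → i' < k → j' < l →
    f i j = f i' j' → i = i' ∧ j = j'

namespace IsGridEmbedding

variable {k l : ℕ} {f : ℕ → ℕ → ℤ × ℤ}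

theorem transpose (hf : IsGridEmbedding k l f) : IsGridEmbedding l k fun i j => f j i where
  isUnitStep_right i j hi hj := hf.isUnitStep_up j i hj hi
  isUnitStep_up i j hi hj := hf.isUnitStep_right j i hj hi
  injOn i j i' j' hi hj hi' hj' h := (hf.injOn j i j' i' hj hi hj' hi' h).symm

theorem ne_of_fst_ne (hf : IsGridEmbedding k l f) {i j i' j' : ℕ} (hi : i < k) (hj : j < l)
    (hi' : i' < k) (hj' : j' < l) (h : i ≠ i') : f i j ≠ f i' j' :=
  fun e => h (hf.injOn _ _ _ _ hi hj hi' hj' e).1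

theorem parallelogram (hf : IsGridEmbedding k l f) {i j : ℕ} (hi : i + 1 < k)
    (hj : j + 1 < l) :
    f (i + 1) (j + 1) - f i (j + 1) = f (i + 1) j - f i j ∧
      f (i + 1) (j + 1) - f (i + 1) j = f i (j + 1) - f i j := by
  have hdiag : f (i + 1) j - f i j + (f (i + 1) (j + 1) - f (i + 1) j) ≠ 0 := by
    rw [sub_add_sub_cancel', sub_ne_zero]
    exact hf.ne_of_fst_ne hi hj (by omega) (by omega) (by omega)
  have hanti : f (i + 1) j - f i j ≠ f i (j + 1) - f i j := by
    rw [Ne, sub_left_inj]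
    exact hf.ne_of_fst_ne hi (by omega) (by omega) hj (by omega)
  obtain ⟨h₁, h₂⟩ := IsUnitStep.eq_of_add_eq_add (hf.isUnitStep_right i j hi (by omega))
    (hf.isUnitStep_up (i + 1) j hi hj) (hf.isUnitStep_up i j (by omega) hj)
    (hf.isUnitStep_right i (j + 1) hi hj) (by abel) hdiag hanti
  exact ⟨h₁.symm, h₂⟩

theorem right_ne_up (hf : IsGridEmbedding k l f) {i j : ℕ} (hi : i + 1 < k) (hj : j + 1 < l) :
    f (i + 1) j - f i j ≠ f i (j + 1) - f i j ∧
      f (i + 1) j - f i j ≠ -(f i (j + 1) - f i j) := by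
  refine ⟨?_, fun h => ?_⟩
  · rw [Ne, sub_left_inj]
    exact hf.ne_of_fst_ne hi (by omega) (by omega) hj (by omega)
  · rw [← (hf.parallelogram hi hj).2, eq_neg_iff_add_eq_zero, sub_add_sub_cancel',
      sub_eq_zero] at h
    exact hf.ne_of_fst_ne hi hj (by omega) (by omega) (by omega) h

theorem right_step_eq (hf : IsGridEmbedding k l f) (hl : 2 ≤ l) :
    ∀ i j, i + 1 < k → j < l → f (i + 1) j - f i j = f 1 0 - f 0 0 := by
  have hcol : ∀ i j, i + 1 < k → j < l → f (i + 1) j - f i j = f (i + 1) 0 - f i 0 := by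
    intro i j hi hj
    induction j with
    | zero => rfl
    | succ j ih => rw [(hf.parallelogram hi hj).1, ih (by omega)]
  have hrow : ∀ i, i + 1 < k → f (i + 1) 0 - f i 0 = f 1 0 - f 0 0 := by
    intro i hi
    induction i with
    | zero => rfl
    | succ i ih =>
      rw [← ih (by omega)]
      have hup : f (i + 1 + 1) 0 - f (i + 1) 0 ≠ -(f (i + 1) 0 - f i 0) := by
        rw [neg_sub, Ne, sub_left_inj]
        exact hf.ne_of_fst_ne hi (by omega) (by omega) (by omega) (by omega)
      have h₁ := hf.right_ne_up (i := i) (j := 0) (by omega) (by omega)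
      have h₂ := hf.right_ne_up (i := i + 1) (j := 0) hi (by omega)
      rw [(hf.parallelogram (i := i) (j := 0) (by omega) (by omega)).2] at h₂
      exact IsUnitStep.eq_of_ne_of_ne_neg (hf.isUnitStep_right _ _ hi (by omega))
        (hf.isUnitStep_right _ _ (by omega) (by omega)) (hf.isUnitStep_up _ _ (by omega) hl)
        h₂.1 h₂.2 h₁.1 h₁.2 hup
  exact fun i j hi hj => (hcol i j hi hj).trans (hrow i hi)

theorem eq_affine (hf : IsGridEmbedding k l f) (hk : 2 ≤ k) (hl : 2 ≤ l) :
    ∀ i j, i < k → j < l → f i j = f 0 0 + i • (f 1 0 - f 0 0) + j • (f 0 1 - f 0 0) := by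
  intro i j hi hj
  have hrow := eq_add_nsmul_of_sub_eq (a := fun n => f n 0) fun n hn =>
    hf.right_step_eq hl n 0 hn (by omega)
  have hcol := eq_add_nsmul_of_sub_eq (a := fun n => f i n) fun n hn =>
    hf.transpose.right_step_eq hk n i hn hi
  rw [hcol j hj, hrow i hi]

end IsGridEmbedding

def gridPoint {k l : ℕ} (p : Fin k × Fin l) : ℤ × ℤ := ((p.1 : ℤ), (p.2 : ℤ))

theorem gridPoint_injective {k l : ℕ} : Function.Injective (gridPoint (k := k) (l := l)) := by
  intro p q h
  simp only [gridPoint, Prod.mk.injEq, Nat.cast_inj, Fin.val_inj] at h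
  exact Prod.ext h.1 h.2

theorem gridGraph_adj_iff {k l : ℕ} {p q : Fin k × Fin l} :
    (gridGraph k l).Adj p q ↔ IsUnitStep (gridPoint q - gridPoint p) := by
  simp only [gridGraph, IsUnitStep, gridPoint, Prod.fst_sub, Prod.snd_sub]
  omega

def natExtend {k l m n : ℕ} (g : Fin k × Fin l → Fin m × Fin n) (i j : ℕ) : ℤ × ℤ :=
  if h : i < k ∧ j < l then gridPoint (g (⟨i, h.1⟩, ⟨j, h.2⟩)) else 0

theorem natExtend_apply {k l m n : ℕ} (g : Fin k × Fin l → Fin m × Fin n)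
    (p : Fin k × Fin l) :
    natExtend g p.1 p.2 = gridPoint (g p) := by
  simp [natExtend]

theorem isGridEmbedding_natExtend {k l m n : ℕ} {g : Fin k × Fin l → Fin m × Fin n}
    (hinj : Function.Injective g)
    (hhom : ∀ p q, (gridGraph k l).Adj p q → (gridGraph m n).Adj (g p) (g q)) :
    IsGridEmbedding k l (natExtend g) := by
  have hstep : ∀ p q, (gridGraph k l).Adj p q →
      IsUnitStep (natExtend g q.1 q.2 - natExtend g p.1 p.2) := fun p q h => by
    rw [natExtend_apply, natExtend_apply, ← gridGraph_adj_iff]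
    exact hhom p q h
  refine ⟨fun i j hi hj => ?_, fun i j hi hj => ?_, fun i j i' j' hi hj hi' hj' h => ?_⟩
  · exact hstep (⟨i, by omega⟩, ⟨j, hj⟩) (⟨i + 1, hi⟩, ⟨j, hj⟩)
      (by simp [gridGraph])
  · exact hstep (⟨i, hi⟩, ⟨j, by omega⟩) (⟨i, hi⟩, ⟨j + 1, hj⟩)
      (by simp [gridGraph])
  · simpa using hinj (gridPoint_injective ((natExtend_apply g (⟨i, hi⟩, ⟨j, hj⟩)).symm.trans
      (h.trans (natExtend_apply g (⟨i', hi'⟩, ⟨j', hj'⟩)))))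

theorem exists_perm_mod_eq_of_affine {α : Type*} {k : ℕ} (hk : 0 < k) {F : α → ℕ}
    {π : α → Fin k} {a ε : ℤ} (hε : IsUnit ε) (hF : ∀ x, (F x : ℤ) = a + ε * π x) :
    ∃ σ : Equiv.Perm (Fin k), ∀ x, F x % k = σ (π x) := by
  have hk' : (0 : ℤ) < k := by exact_mod_cast hk
  let σ : Fin k → Fin k := fun s =>
    ⟨((a + ε * s) % k).toNat, by have := Int.emod_lt_of_pos (a + ε * s) hk'; omega⟩
  have hσ : Function.Injective σ := by
    intro s t hst
    have hmod : (a + ε * s) % k = (a + ε * t) % k := by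
      have := congrArg Fin.val hst
      simp only [σ] at this
      have h₁ := Int.emod_nonneg (a + ε * s) hk'.ne'
      have h₂ := Int.emod_nonneg (a + ε * t) hk'.ne'
      omega
    have hdvd : (k : ℤ) ∣ (t : ℤ) - s := by
      rw [← hε.dvd_mul_left, mul_sub, ← add_sub_add_left_eq_sub _ _ a]
      exact Int.ModEq.dvd hmod
    have := Int.eq_zero_of_abs_lt_dvd hdvd (by rw [abs_lt]; omega)
    exact Fin.ext (by omega)
  refine ⟨Equiv.ofBijective σ (Finite.injective_iff_bijective.mp hσ), fun x => ?_⟩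
  simp only [Equiv.ofBijective_apply, σ, ← hF]
  omega

section Lines

variable {k l : ℕ}

theorem gridGraph_induce_perm_fst_eq_connected (hl : 0 < l) (σ : Equiv.Perm (Fin k))
    (a : Fin k) :
    ((gridGraph k l).induce {p | σ p.1 = a}).Connected := by
  obtain ⟨n, rfl⟩ := Nat.exists_eq_add_one_of_ne_zero hl.ne'
  let φ : SimpleGraph.pathGraph (n + 1) →g (gridGraph k (n + 1)).induce {p | σ p.1 = a} :=
    { toFun := fun j => ⟨(σ.symm a, j), σ.apply_symm_apply a⟩
      map_rel' := fun {u v} h => by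
        rw [SimpleGraph.pathGraph_adj] at h
        simp only [SimpleGraph.comap_adj, Function.Embedding.subtype_apply, gridGraph]
        omega }
  refine (SimpleGraph.pathGraph_connected n).map φ fun ⟨⟨b, j⟩, hb⟩ => ⟨j, ?_⟩
  simp [φ, ← show b = σ.symm a from σ.eq_symm_apply.mpr hb]

theorem gridGraph_induce_perm_snd_eq_connected (hk : 0 < k) (σ : Equiv.Perm (Fin l))
    (b : Fin l) :
    ((gridGraph k l).induce {p | σ p.2 = b}).Connected := by
  obtain ⟨n, rfl⟩ := Nat.exists_eq_add_one_of_ne_zero hk.ne'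
  let φ : SimpleGraph.pathGraph (n + 1) →g (gridGraph (n + 1) l).induce {p | σ p.2 = b} :=
    { toFun := fun i => ⟨(i, σ.symm b), σ.apply_symm_apply b⟩
      map_rel' := fun {u v} h => by
        rw [SimpleGraph.pathGraph_adj] at h
        simp only [SimpleGraph.comap_adj, Function.Embedding.subtype_apply, gridGraph]
        omega }
  refine (SimpleGraph.pathGraph_connected n).map φ fun ⟨⟨i, a⟩, ha⟩ => ⟨i, ?_⟩
  simp [φ, ← show a = σ.symm b from σ.eq_symm_apply.mpr ha]

end Lines

theorem gridLikeOn_perm_fst_snd {k : ℕ} (hk : 0 < k) (σ τ : Equiv.Perm (Fin k)) :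
    GridLikeOn (gridGraph k k) k fun p => (σ p.1, τ p.2) :=
  ⟨fun c => ⟨(σ.symm c.1, τ.symm c.2), by simp⟩, fun i =>
    ⟨gridGraph_induce_perm_fst_eq_connected hk σ i,
      gridGraph_induce_perm_snd_eq_connected hk τ i⟩⟩

theorem gridLikeOn_perm_snd_fst {k : ℕ} (hk : 0 < k) (σ τ : Equiv.Perm (Fin k)) :
    GridLikeOn (gridGraph k k) k fun p => (σ p.2, τ p.1) :=
  ⟨fun c => ⟨(τ.symm c.2, σ.symm c.1), by simp⟩, fun i =>
    ⟨gridGraph_induce_perm_snd_eq_connected hk σ i,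
      gridGraph_induce_perm_fst_eq_connected hk τ i⟩⟩

theorem exists_perm_mod_of_injective_hom {k m n : ℕ} (hk : 0 < k)
    {g : Fin k × Fin k → Fin m × Fin n} (hinj : Function.Injective g)
    (hhom : ∀ p q, (gridGraph k k).Adj p q → (gridGraph m n).Adj (g p) (g q)) :
    ∃ σ τ : Equiv.Perm (Fin k),
      (∀ p, ((g p).1 : ℕ) % k = σ p.1 ∧ ((g p).2 : ℕ) % k = τ p.2) ∨
        ∀ p, ((g p).1 : ℕ) % k = σ p.2 ∧ ((g p).2 : ℕ) % k = τ p.1 := by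
  obtain rfl | hk2 : k = 1 ∨ 2 ≤ k := by omega
  · exact ⟨1, 1, Or.inl fun p => by simp [Fin.val_eq_zero, Nat.mod_one]⟩
  have hf := isGridEmbedding_natExtend hinj hhom
  set f := natExtend g
  have hcoord : ∀ p : Fin k × Fin k, gridPoint (g p) =
      f 0 0 + (p.1 : ℕ) • (f 1 0 - f 0 0) + (p.2 : ℕ) • (f 0 1 - f 0 0) := fun p =>
    (natExtend_apply g p).symm.trans (hf.eq_affine hk2 hk2 _ _ p.1.isLt p.2.isLt)
  obtain ⟨hne, hne'⟩ := hf.right_ne_up (i := 0) (j := 0) (by omega) (by omega)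
  obtain ⟨ε, δ, hε, hδ, ⟨hu, hw⟩ | ⟨hu, hw⟩⟩ := IsUnitStep.eq_axes_of_ne_of_ne_neg
    (hf.isUnitStep_right 0 0 (by omega) (by omega)) (hf.isUnitStep_up 0 0 (by omega) (by omega))
    hne hne'
  all_goals
    simp only [zero_add] at hu hw
    simp only [hu, hw, gridPoint, Prod.ext_iff, Prod.fst_add, Prod.snd_add, Prod.smul_mk,
      smul_zero, nsmul_eq_mul, add_zero, mul_comm] at hcoord
  · obtain ⟨σ, hσ⟩ := exists_perm_mod_eq_of_affine hk hε fun p => (hcoord p).1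
    obtain ⟨τ, hτ⟩ := exists_perm_mod_eq_of_affine hk hδ fun p => (hcoord p).2
    exact ⟨σ, τ, Or.inl fun p => ⟨hσ p, hτ p⟩⟩
  · obtain ⟨σ, hσ⟩ := exists_perm_mod_eq_of_affine hk hδ fun p => (hcoord p).1
    obtain ⟨τ, hτ⟩ := exists_perm_mod_eq_of_affine hk hε fun p => (hcoord p).2
    exact ⟨σ, τ, Or.inr fun p => ⟨hσ p, hτ p⟩⟩

theorem reduced_injective_grid_hom_is_gridlike_general
    (k m : ℕ) (hk : 0 < k)
    (ρ : Fin m × Fin m → Fin k × Fin k)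
    (hρ : ∀ p : Fin m × Fin m,
      ρ p = (⟨(p.1 : ℕ) % k, Nat.mod_lt _ hk⟩, ⟨(p.2 : ℕ) % k, Nat.mod_lt _ hk⟩))
    (g : Fin k × Fin k → Fin m × Fin m)
    (hinj : Function.Injective g)
    (hhom : ∀ p q : Fin k × Fin k, (gridGraph k k).Adj p q → (gridGraph m m).Adj (g p) (g q)) :
    GridLikeOn (gridGraph k k) k (fun p => ρ (g p)) := by
  obtain ⟨σ, τ, h | h⟩ := exists_perm_mod_of_injective_hom hk hinj hhom
  · convert gridLikeOn_perm_fst_snd hk σ τ using 2 with p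
    rw [hρ]
    exact Prod.ext (Fin.ext (h p).1) (Fin.ext (h p).2)
  · convert gridLikeOn_perm_snd_fst hk σ τ using 2 with p
    rw [hρ]
    exact Prod.ext (Fin.ext (h p).1) (Fin.ext (h p).2)

/-- Grid-likeness of reduced injective grid homomorphisms (Example of
Section 4). Here `ρ(i, j) = (i mod k, j mod k)` is given by the hypothesis `hρ`. -/
theorem reduced_injective_grid_hom_is_gridlike
    (k m : ℕ) (hk : 0 < k) (hkm : k ≤ m)
    (ρ : Fin m × Fin m → Fin k × Fin k)
    (hρ : ∀ p : Fin m × Fin m,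
      ρ p = (⟨(p.1 : ℕ) % k, Nat.mod_lt _ hk⟩, ⟨(p.2 : ℕ) % k, Nat.mod_lt _ hk⟩))
    (g : Fin k × Fin k → Fin m × Fin m)
    (hinj : Function.Injective g)
    (hhom : ∀ p q : Fin k × Fin k, (gridGraph k k).Adj p q → (gridGraph m m).Adj (g p) (g q)) :
    GridLikeOn (gridGraph k k) k (fun p => ρ (g p)) :=
  reduced_injective_grid_hom_is_gridlike_general k m hk ρ hρ g hinj hhom
end
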